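/- Let A ∈ S^{n×n} have full row rank, Hermite form H with diagonal D-degrees (h_1,...,h_n), and let (d_1,...,d_n) ∈ N^n. There exist matrices P, G ∈ S^{n×n} with P·A = G, where G is upper triangular with monic diagonal entries, deg_D G_{ii} = d_i, and deg_D G_{ij} < d_j for i < j, if and only if d_i ≥ h_i for all i. -/

import Mathlib

/-- Abstract presentation of a skew (Ore/differential) polynomial ring `S = K[D; δ]`:
`S` is a ring containing `K` via `ι`, with a distinguished element `D` satisfying the
commutation rule `D * a = a * D + δ a`, and every element of `S` is (uniquely) a finite
sum `∑ aₙ Dⁿ`, with coefficients `coeff` supported on `supp`. -/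
structure DiffPolyRing (K : Type) [CommRing K] (S : Type) [Ring S] (δ : K → K) where
  ι : K →+* S
  D : S
  comm_rule : ∀ a : K, D * ι a = ι a * D + ι (δ a)
  coeff : S → ℕ → K
  supp : S → Finset ℕ
  mem_supp : ∀ f n, n ∈ supp f ↔ coeff f n ≠ 0
  coeff_add : ∀ f g n, coeff (f + g) n = coeff f n + coeff g n
  coeff_ext : ∀ f g : S, (∀ n, coeff f n = coeff g n) → f = g
  coeff_monomial : ∀ (a : K) (i n : ℕ), coeff (ι a * D ^ i) n = if n = i then a else 0
  repr_sum : ∀ f : S, f = ∑ n ∈ supp f, ι (coeff f n) * D ^ n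

namespace DiffPolyRing

variable {K S : Type} [CommRing K] [Ring S] {δ : K → K}

/-- Degree in the variable `D`, with `degD 0 = ⊥` (i.e. `-∞`). -/
noncomputable def degD (R : DiffPolyRing K S δ) (f : S) : WithBot ℕ := (R.supp f).max

/-- Degree in `D` as a natural number (`0` for the zero polynomial). -/
noncomputable def natDegD (R : DiffPolyRing K S δ) (f : S) : ℕ := WithBot.unbotD 0 (R.degD f)

/-- `f` is monic: its leading coefficient (in `D`) is `1`. -/
noncomputable def Monic (R : DiffPolyRing K S δ) (f : S) : Prop :=
  R.coeff f (R.natDegD f) = 1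

/-- `H` is in Hermite form: upper triangular, monic diagonal entries, and each
off-diagonal entry has `D`-degree strictly less than the diagonal entry below it. -/
noncomputable def HermiteForm (R : DiffPolyRing K S δ) {n : ℕ}
    (H : Matrix (Fin n) (Fin n) S) : Prop :=
  (∀ i j, j < i → H i j = 0) ∧ (∀ i, R.Monic (H i i)) ∧
    (∀ i j, i < j → R.degD (H i j) < R.degD (H j j))

/-- The rows of `A` are left `S`-linearly independent. -/
def FullRowRank {n : ℕ} (A : Matrix (Fin n) (Fin n) S) : Prop :=
  ∀ c : Fin n → S, (∀ j, (∑ i, c i * A i j) = 0) → c = 0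

end DiffPolyRing

/-!
If `P * A = G`, then `Q := P * U⁻¹` satisfies `Q * H = G`. As `S` has no zero divisors and
`H`, `G` are upper triangular with nonzero diagonal, `Q` is upper triangular, so
`G i i = Q i i * H i i` and degrees add: `h i ≤ dv i`. Conversely, if `h i ≤ dv i`, multiply
row `i` of `H` by `D ^ (dv i - h i)`; since `D * f - f * D` does not raise the degree of `f`,
this row stays monic, now of degree `dv i`. Then reduce the entries above each pivot, column
by column from the left, by division with remainder by the monic pivot.
-/

namespace DiffPolyRing

variable {K S : Type} [CommRing K] [Ring S] {δ : K → K} (R : DiffPolyRing K S δ)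

def coeffAddHom (n : ℕ) : S →+ K := AddMonoidHom.mk' (R.coeff · n) (R.coeff_add · · n)

theorem coeff_zero (n : ℕ) : R.coeff 0 n = 0 := (R.coeffAddHom n).map_zero

theorem coeff_sub (f g : S) (n : ℕ) : R.coeff (f - g) n = R.coeff f n - R.coeff g n :=
  (R.coeffAddHom n).map_sub f g

theorem coeff_sum {ι : Type*} (s : Finset ι) (f : ι → S) (n : ℕ) :
    R.coeff (∑ i ∈ s, f i) n = ∑ i ∈ s, R.coeff (f i) n :=
  map_sum (R.coeffAddHom n) f s

theorem coeff_eq_zero_of_notMem_supp {f : S} {n : ℕ} (h : n ∉ R.supp f) : R.coeff f n = 0 :=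
  not_not.1 (mt (R.mem_supp f n).2 h)

theorem le_degD_of_coeff_ne_zero {f : S} {n : ℕ} (h : R.coeff f n ≠ 0) :
    (n : WithBot ℕ) ≤ R.degD f := by
  rw [Nat.cast_withBot]
  exact Finset.le_max ((R.mem_supp f n).2 h)

theorem coeff_eq_zero_of_degD_lt {f : S} {n : ℕ} (h : R.degD f < n) : R.coeff f n = 0 :=
  not_not.1 fun hc => (R.le_degD_of_coeff_ne_zero hc).not_gt h

theorem degD_le_iff {f : S} {N : ℕ} : R.degD f ≤ N ↔ ∀ n, N < n → R.coeff f n = 0 := by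
  simp only [degD, Finset.max_le_iff, R.mem_supp, Nat.cast_withBot, WithBot.coe_le_coe]
  exact forall_congr' fun n => by rw [← not_imp_not, not_not, not_le]

theorem degD_lt_of_le_of_coeff_eq_zero {f : S} {N : ℕ} (hle : R.degD f ≤ N)
    (hN : R.coeff f N = 0) : R.degD f < N :=
  hle.lt_of_ne fun h => (R.mem_supp f N).1 (Finset.mem_of_max (h.trans (Nat.cast_withBot N))) hN

theorem degD_eq_of_le_of_coeff_ne_zero {f : S} {N : ℕ} (hle : R.degD f ≤ N)
    (hN : R.coeff f N ≠ 0) : R.degD f = N :=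
  hle.antisymm (R.le_degD_of_coeff_ne_zero hN)

theorem degD_eq_bot_iff {f : S} : R.degD f = ⊥ ↔ f = 0 := by
  rw [degD, Finset.max_eq_bot, Finset.eq_empty_iff_forall_notMem]
  simp only [R.mem_supp, not_not]
  exact ⟨fun h => R.coeff_ext f 0 fun n => by rw [h, coeff_zero],
    by rintro rfl; exact R.coeff_zero⟩

theorem natDegD_eq_of_degD_eq {f : S} {N : ℕ} (h : R.degD f = N) : R.natDegD f = N := by
  rw [natDegD, h, Nat.cast_withBot, WithBot.unbotD_coe]

theorem degD_eq_natDegD {f : S} (hf : f ≠ 0) : R.degD f = R.natDegD f := by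
  obtain ⟨N, hN⟩ := WithBot.ne_bot_iff_exists.1 (mt R.degD_eq_bot_iff.1 hf)
  rw [← Nat.cast_withBot] at hN
  rw [R.natDegD_eq_of_degD_eq hN.symm, hN]

theorem coeff_natDegD_ne_zero {f : S} (hf : f ≠ 0) : R.coeff f (R.natDegD f) ≠ 0 :=
  (R.mem_supp f _).1 (Finset.mem_of_max ((R.degD_eq_natDegD hf).trans (Nat.cast_withBot _)))

theorem monic_iff_of_degD_eq {f : S} {N : ℕ} (h : R.degD f = N) :
    R.Monic f ↔ R.coeff f N = 1 := by
  rw [Monic, R.natDegD_eq_of_degD_eq h]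

variable {R} in
theorem Monic.ne_zero [Nontrivial K] {f : S} (h : R.Monic f) : f ≠ 0 := by
  rintro rfl
  rw [Monic, R.coeff_zero] at h
  exact zero_ne_one h

theorem degD_add_le {f g : S} {N : ℕ} (hf : R.degD f ≤ N) (hg : R.degD g ≤ N) :
    R.degD (f + g) ≤ N := by
  rw [degD_le_iff] at *
  intro n hn
  rw [R.coeff_add, hf n hn, hg n hn, add_zero]

theorem degD_sub_le {f g : S} {N : ℕ} (hf : R.degD f ≤ N) (hg : R.degD g ≤ N) :
    R.degD (f - g) ≤ N := by
  rw [degD_le_iff] at *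
  intro n hn
  rw [R.coeff_sub, hf n hn, hg n hn, sub_zero]

theorem degD_sum_le {ι : Type*} {s : Finset ι} {f : ι → S} {N : ℕ}
    (h : ∀ i ∈ s, R.degD (f i) ≤ N) : R.degD (∑ i ∈ s, f i) ≤ N := by
  simp only [degD_le_iff, R.coeff_sum] at *
  exact fun n hn => Finset.sum_eq_zero fun i hi => h i hi n hn

theorem degD_monomial_le (c : K) (k : ℕ) : R.degD (R.ι c * R.D ^ k) ≤ k :=
  R.degD_le_iff.2 fun n hn => by rw [R.coeff_monomial, if_neg hn.ne']

theorem coeff_ι_mul (c : K) (f : S) (n : ℕ) : R.coeff (R.ι c * f) n = c * R.coeff f n := by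
  conv_lhs => rw [R.repr_sum f]
  simp only [Finset.mul_sum, ← mul_assoc, ← map_mul, R.coeff_sum, R.coeff_monomial,
    Finset.sum_ite_eq]
  split_ifs with h
  · rfl
  · rw [R.coeff_eq_zero_of_notMem_supp h, mul_zero]

theorem degD_ι_mul_le (c : K) {f : S} {N : ℕ} (hf : R.degD f ≤ N) :
    R.degD (R.ι c * f) ≤ N := by
  rw [degD_le_iff] at *
  exact fun n hn => by rw [R.coeff_ι_mul, hf n hn, mul_zero]

theorem coeff_mul_D_succ (f : S) (n : ℕ) : R.coeff (f * R.D) (n + 1) = R.coeff f n := by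
  conv_lhs => rw [R.repr_sum f]
  simp only [Finset.sum_mul, mul_assoc, ← pow_succ, R.coeff_sum, R.coeff_monomial,
    Nat.add_right_cancel_iff, Finset.sum_ite_eq]
  split_ifs with h
  · rfl
  · rw [R.coeff_eq_zero_of_notMem_supp h]

theorem degD_mul_D_le {f : S} {N : ℕ} (hf : R.degD f ≤ N) : R.degD (f * R.D) ≤ ↑(N + 1) := by
  rw [degD_le_iff] at *
  intro n hn
  obtain ⟨k, rfl⟩ := Nat.exists_eq_add_of_lt hn
  rw [R.coeff_mul_D_succ]
  exact hf _ (by omega)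

theorem degD_D_mul_sub_mul_D_le {f : S} {N : ℕ} (hf : R.degD f ≤ N) :
    R.degD (R.D * f - f * R.D) ≤ N := by
  have hcomm : R.D * f - f * R.D = ∑ k ∈ R.supp f, R.ι (δ (R.coeff f k)) * R.D ^ k := by
    conv_lhs => rw [R.repr_sum f]
    rw [Finset.mul_sum, Finset.sum_mul, ← Finset.sum_sub_distrib]
    refine Finset.sum_congr rfl fun k _ => ?_
    rw [← mul_assoc, R.comm_rule, add_mul, mul_assoc, mul_assoc, ← pow_succ, ← pow_succ',
      add_sub_cancel_left]
  rw [hcomm]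
  refine R.degD_sum_le fun k hk => (R.degD_monomial_le _ k).trans ?_
  exact (R.le_degD_of_coeff_ne_zero ((R.mem_supp f k).1 hk)).trans hf

theorem degD_D_mul_le {f : S} {N : ℕ} (hf : R.degD f ≤ N) : R.degD (R.D * f) ≤ ↑(N + 1) := by
  rw [← add_sub_cancel (f * R.D) (R.D * f)]
  exact R.degD_add_le (R.degD_mul_D_le hf)
    ((R.degD_D_mul_sub_mul_D_le hf).trans (by exact_mod_cast N.le_succ))

theorem coeff_D_mul_succ {f : S} {N : ℕ} (hf : R.degD f ≤ N) :
    R.coeff (R.D * f) (N + 1) = R.coeff f N := by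
  rw [← add_sub_cancel (f * R.D) (R.D * f), R.coeff_add, R.coeff_mul_D_succ,
    R.coeff_eq_zero_of_degD_lt ((R.degD_D_mul_sub_mul_D_le hf).trans_lt
      (by exact_mod_cast N.lt_succ_self)), add_zero]

theorem degD_D_pow_mul_le (k : ℕ) {f : S} {N : ℕ} (hf : R.degD f ≤ N) :
    R.degD (R.D ^ k * f) ≤ ↑(k + N) := by
  induction k with
  | zero => simpa using hf
  | succ k ih => rw [pow_succ', mul_assoc, add_right_comm]; exact R.degD_D_mul_le ih

theorem coeff_D_pow_mul (k : ℕ) {f : S} {N : ℕ} (hf : R.degD f ≤ N) :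
    R.coeff (R.D ^ k * f) (k + N) = R.coeff f N := by
  induction k with
  | zero => simp
  | succ k ih =>
    rw [pow_succ', mul_assoc, add_right_comm, R.coeff_D_mul_succ (R.degD_D_pow_mul_le k hf), ih]

theorem mul_eq_sum (f g : S) : f * g = ∑ k ∈ R.supp f, R.ι (R.coeff f k) * (R.D ^ k * g) := by
  conv_lhs => rw [R.repr_sum f]
  simp only [Finset.sum_mul, mul_assoc]

theorem degD_mul_le {f g : S} {a b : ℕ} (hf : R.degD f ≤ a) (hg : R.degD g ≤ b) :
    R.degD (f * g) ≤ ↑(a + b) := by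
  rw [R.mul_eq_sum]
  refine R.degD_sum_le fun k hk => R.degD_ι_mul_le _ ((R.degD_D_pow_mul_le k hg).trans ?_)
  have : k ≤ a := by exact_mod_cast (R.le_degD_of_coeff_ne_zero ((R.mem_supp f k).1 hk)).trans hf
  exact_mod_cast Nat.add_le_add_right this b

theorem coeff_mul_of_degD_le {f g : S} {a b : ℕ} (hf : R.degD f ≤ a) (hg : R.degD g ≤ b) :
    R.coeff (f * g) (a + b) = R.coeff f a * R.coeff g b := by
  rw [R.mul_eq_sum, R.coeff_sum]
  simp only [R.coeff_ι_mul]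
  rw [Finset.sum_eq_single a]
  · rw [R.coeff_D_pow_mul a hg]
  · intro k hk hka
    have : k < a := lt_of_le_of_ne (by exact_mod_cast
      (R.le_degD_of_coeff_ne_zero ((R.mem_supp f k).1 hk)).trans hf) hka
    rw [R.coeff_eq_zero_of_degD_lt ((R.degD_D_pow_mul_le k hg).trans_lt
      (by exact_mod_cast Nat.add_lt_add_right this b)), mul_zero]
  · intro ha
    rw [R.coeff_eq_zero_of_notMem_supp ha, zero_mul]

theorem degD_mul [NoZeroDivisors K] {f g : S} (hf : f ≠ 0) (hg : g ≠ 0) :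
    R.degD (f * g) = R.degD f + R.degD g := by
  have hf' := R.degD_eq_natDegD hf
  have hg' := R.degD_eq_natDegD hg
  rw [hf', hg', ← Nat.cast_add]
  refine R.degD_eq_of_le_of_coeff_ne_zero (R.degD_mul_le hf'.le hg'.le) ?_
  rw [R.coeff_mul_of_degD_le hf'.le hg'.le]
  exact mul_ne_zero (R.coeff_natDegD_ne_zero hf) (R.coeff_natDegD_ne_zero hg)

theorem noZeroDivisors (R : DiffPolyRing K S δ) [NoZeroDivisors K] : NoZeroDivisors S where
  eq_zero_or_eq_zero_of_mul_eq_zero {f g} h := by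
    by_contra! hfg
    have := R.degD_mul hfg.1 hfg.2
    rw [h, R.degD_eq_natDegD hfg.1, R.degD_eq_natDegD hfg.2, R.degD_eq_bot_iff.2 rfl,
      ← Nat.cast_add] at this
    exact WithBot.bot_ne_coe this

theorem monic_D_pow_mul [Nontrivial K] {f : S} {N : ℕ} (hm : R.Monic f) (hf : R.degD f = N)
    (k : ℕ) : R.Monic (R.D ^ k * f) ∧ R.degD (R.D ^ k * f) = ↑(k + N) := by
  have hcoeff : R.coeff (R.D ^ k * f) (k + N) = 1 := by
    rw [R.coeff_D_pow_mul k hf.le, ← R.monic_iff_of_degD_eq hf]; exact hm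
  have hdeg := R.degD_eq_of_le_of_coeff_ne_zero (R.degD_D_pow_mul_le k hf.le)
    (hcoeff ▸ one_ne_zero)
  exact ⟨(R.monic_iff_of_degD_eq hdeg).2 hcoeff, hdeg⟩

theorem exists_eq_mul_add_of_monic {g : S} {d : ℕ} (hg : R.degD g = d) (hgm : R.Monic g)
    (f : S) : ∃ q r : S, f = q * g + r ∧ R.degD r < d := by
  induction hf : R.degD f using WellFoundedLT.induction generalizing f with
  | _ N ih =>
  by_cases hN : N < d
  · exact ⟨0, f, by rw [zero_mul, zero_add], hf ▸ hN⟩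
  obtain ⟨k, rfl⟩ : ∃ k : ℕ, N = k := by
    obtain ⟨k, hk⟩ := WithBot.ne_bot_iff_exists.1 (ne_bot_of_le_ne_bot (WithBot.coe_ne_bot)
      (not_lt.1 hN))
    exact ⟨k, hk.symm.trans (Nat.cast_withBot k).symm⟩
  have hdk : d ≤ k := by exact_mod_cast not_lt.1 hN
  set t := R.ι (R.coeff f k) * R.D ^ (k - d)
  have htg := R.degD_mul_le (R.degD_monomial_le (R.coeff f k) (k - d)) hg.le
  have htg_coeff := R.coeff_mul_of_degD_le (R.degD_monomial_le (R.coeff f k) (k - d)) hg.le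
  rw [Nat.sub_add_cancel hdk] at htg htg_coeff
  rw [R.coeff_monomial, if_pos rfl, (R.monic_iff_of_degD_eq hg).1 hgm, mul_one] at htg_coeff
  have hlt : R.degD (f - t * g) < k := R.degD_lt_of_le_of_coeff_eq_zero
    (R.degD_sub_le hf.le htg) (by rw [R.coeff_sub, htg_coeff, sub_self])
  obtain ⟨q, r, hqr, hr⟩ := ih _ hlt (f - t * g) rfl
  exact ⟨q + t, r, by rw [add_mul, add_right_comm, ← hqr, sub_add_cancel], hr⟩

end DiffPolyRing

namespace Matrix

variable {m R : Type*} [Fintype m] [LinearOrder m] [NonUnitalNonAssocSemiring R]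

theorem IsUpperTriangular.mul_apply_self {M N : Matrix m m R} (hM : M.IsUpperTriangular)
    (hN : N.IsUpperTriangular) (i : m) : (M * N) i i = M i i * N i i := by
  rw [mul_apply, Finset.sum_eq_single i]
  · intro k _ hki
    rcases hki.lt_or_gt with hk | hk
    · rw [hM hk, zero_mul]
    · rw [hN hk, mul_zero]
  · simp

theorem isUpperTriangular_of_mul [NoZeroDivisors R] {M N : Matrix m m R}
    (hMN : (M * N).IsUpperTriangular) (hN : N.IsUpperTriangular) (hN0 : ∀ i, N i i ≠ 0) :
    M.IsUpperTriangular := by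
  intro i j hji
  induction j using WellFoundedLT.induction generalizing i with
  | _ j ih =>
  have hentry : (M * N) i j = M i j * N j j := by
    rw [mul_apply, Finset.sum_eq_single j]
    · intro k _ hkj
      rcases hkj.lt_or_gt with hk | hk
      · rw [ih k hk (hk.trans hji), zero_mul]
      · rw [hN hk, mul_zero]
    · simp
  exact (mul_eq_zero.1 (hentry ▸ hMN hji)).resolve_right (hN0 j)

end Matrix

namespace DiffPolyRing

open Matrix

variable {K S : Type} [CommRing K] [Ring S] {δ : K → K} (R : DiffPolyRing K S δ)
  {m : Type*} [Fintype m] [LinearOrder m]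

theorem degD_diag_le_of_mul_eq [NoZeroDivisors K] {Q H G : Matrix m m S}
    (hH : H.IsUpperTriangular) (hH0 : ∀ i, H i i ≠ 0) (hG : G.IsUpperTriangular)
    (hG0 : ∀ i, G i i ≠ 0) (hQHG : Q * H = G) (i : m) :
    R.degD (H i i) ≤ R.degD (G i i) := by
  have := R.noZeroDivisors
  have hQ := isUpperTriangular_of_mul (hQHG ▸ hG) hH hH0
  have hGii : G i i = Q i i * H i i := hQHG ▸ hQ.mul_apply_self hH i
  have hQ0 : Q i i ≠ 0 := left_ne_zero_of_mul (hGii ▸ hG0 i)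
  rw [hGii, R.degD_mul hQ0 (hH0 i), R.degD_eq_natDegD hQ0]
  exact le_add_of_nonneg_left (by exact_mod_cast Nat.zero_le _)

theorem exists_mul_reduce_column {G : Matrix m m S} (hG : G.IsUpperTriangular) {t : m} {d : ℕ}
    (hdeg : R.degD (G t t) = d) (hmon : R.Monic (G t t)) :
    ∃ E : Matrix m m S, (∀ i j, (i < t → j < t) → (E * G) i j = G i j) ∧
      ∀ i < t, R.degD ((E * G) i t) < d := by
  choose q r hqr hr using fun i => R.exists_eq_mul_add_of_monic hdeg hmon (G i t)
  let c : m → S := fun i => if i < t then q i else 0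
  have hentry : ∀ i j, ((1 - vecMulVec c (Pi.single t 1)) * G) i j = G i j - c i * G t j := by
    intro i j
    simp [Matrix.sub_mul, vecMulVec_mul, vecMulVec_apply]
  refine ⟨1 - vecMulVec c (Pi.single t 1), fun i j hij => ?_, fun i hi => ?_⟩
  · rw [hentry]
    by_cases hi : i < t
    · rw [hG (hij hi), mul_zero, sub_zero]
    · simp [c, hi]
  · rw [hentry, hqr i]
    simpa [c, hi] using hr i

theorem exists_mul_isUpperTriangular_degD_lt {G : Matrix m m S} (hG : G.IsUpperTriangular)
    {d : m → ℕ} (hdeg : ∀ i, R.degD (G i i) = d i) (hmon : ∀ i, R.Monic (G i i)) :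
    ∃ E : Matrix m m S, (E * G).IsUpperTriangular ∧ (∀ i, (E * G) i i = G i i) ∧
      ∀ i j, i < j → R.degD ((E * G) i j) < d j := by
  suffices ∀ s : Finset m, ∃ E : Matrix m m S, (E * G).IsUpperTriangular ∧
      (∀ i, (E * G) i i = G i i) ∧ ∀ i j, i < j → j ∈ s → R.degD ((E * G) i j) < d j by
    obtain ⟨E, hup, hdiag, hred⟩ := this Finset.univ
    exact ⟨E, hup, hdiag, fun i j hij => hred i j hij (Finset.mem_univ j)⟩
  intro s
  induction s using Finset.induction_on_max with
  | empty => exact ⟨1, by rwa [Matrix.one_mul], by simp, by simp⟩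
  | insert t s hs ih =>
    obtain ⟨E, hup, hdiag, hred⟩ := ih
    obtain ⟨E', hE', hred'⟩ :=
      R.exists_mul_reduce_column hup (by rw [hdiag]; exact hdeg t) (by rw [hdiag]; exact hmon t)
    refine ⟨E' * E, ?_, fun i => ?_, fun i j hij hj => ?_⟩ <;> rw [Matrix.mul_assoc]
    · intro i j hji
      rw [hE' i j fun hi => hji.trans hi]
      exact hup hji
    · rw [hE' i i id, hdiag i]
    · rcases Finset.mem_insert.1 hj with rfl | hj
      · exact hred' i hij
      · rw [hE' i j fun _ => hs j hj]
        exact hred i j hij hj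

end DiffPolyRing

theorem hermite_degree_solvability_general
    {F : Type} [Field F] {S : Type} [Ring S]
    (δ : RatFunc F → RatFunc F)
    (R : DiffPolyRing (RatFunc F) S δ) {n : ℕ}
    (A U H : Matrix (Fin n) (Fin n) S) (h dv : Fin n → ℕ)
    (hU : IsUnit U) (hUA : U * A = H) (hH : R.HermiteForm H)
    (hdiag : ∀ i, R.degD (H i i) = (h i : WithBot ℕ)) :
    (∃ P G : Matrix (Fin n) (Fin n) S, P * A = G ∧
        (∀ i j, j < i → G i j = 0) ∧
        (∀ i, R.Monic (G i i) ∧ R.degD (G i i) = (dv i : WithBot ℕ)) ∧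
        (∀ i j, i < j → R.degD (G i j) < (dv j : WithBot ℕ))) ↔
      ∀ i, h i ≤ dv i := by
  obtain ⟨hHup, hHmon, -⟩ := hH
  replace hHup : H.IsUpperTriangular := fun i j hij => hHup i j hij
  constructor
  · rintro ⟨P, G, hPA, hGup, hGdiag, -⟩ i
    obtain ⟨V, hVU⟩ := hU.exists_left_inv
    have hQHG : P * V * H = G := by
      rw [← hPA, ← hUA, Matrix.mul_assoc, ← Matrix.mul_assoc V, hVU, Matrix.one_mul]
    have hle := R.degD_diag_le_of_mul_eq hHup (fun i => (hHmon i).ne_zero)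
      (fun i j hij => hGup i j hij) (fun i => (hGdiag i).1.ne_zero) hQHG i
    rw [hdiag i, (hGdiag i).2] at hle
    exact_mod_cast hle
  · intro hle
    let E₀ : Matrix (Fin n) (Fin n) S := Matrix.diagonal fun i => R.D ^ (dv i - h i)
    have hG₀ : ∀ i, R.Monic ((E₀ * H) i i) ∧ R.degD ((E₀ * H) i i) = dv i := fun i => by
      simp only [E₀, Matrix.diagonal_mul]
      have := R.monic_D_pow_mul (hHmon i) (hdiag i) (dv i - h i)
      rwa [Nat.sub_add_cancel (hle i)] at this
    obtain ⟨E, hup, hdiagE, hred⟩ := R.exists_mul_isUpperTriangular_degD_lt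
      ((Matrix.blockTriangular_diagonal _).mul hHup) (fun i => (hG₀ i).2) (fun i => (hG₀ i).1)
    refine ⟨E * E₀ * U, E * (E₀ * H), by simp only [← hUA, Matrix.mul_assoc],
      fun i j hij => hup hij, fun i => hdiagE i ▸ hG₀ i, hred⟩

/-- solvability criterion. With `H` the Hermite form of `A` having
diagonal `D`-degrees `h`, there exist `P, G` with `P·A = G`, `G` upper triangular with
monic diagonal entries of degrees exactly `dv i` and off-diagonal degrees `< dv j`,
if and only if `h i ≤ dv i` for all `i`. -/
theorem hermite_degree_solvability
    {F : Type} [Field F] [CharZero F] {S : Type} [Ring S]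
    (δ : RatFunc F → RatFunc F)
    (hδadd : ∀ a b : RatFunc F, δ (a + b) = δ a + δ b)
    (hδmul : ∀ a b : RatFunc F, δ (a * b) = a * δ b + δ a * b)
    (R : DiffPolyRing (RatFunc F) S δ) {n : ℕ}
    (A U H : Matrix (Fin n) (Fin n) S) (h dv : Fin n → ℕ)
    (hA : DiffPolyRing.FullRowRank A)
    (hU : IsUnit U) (hUA : U * A = H) (hH : R.HermiteForm H)
    (hdiag : ∀ i, R.degD (H i i) = (h i : WithBot ℕ)) :
    (∃ P G : Matrix (Fin n) (Fin n) S, P * A = G ∧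
        (∀ i j, j < i → G i j = 0) ∧
        (∀ i, R.Monic (G i i) ∧ R.degD (G i i) = (dv i : WithBot ℕ)) ∧
        (∀ i j, i < j → R.degD (G i j) < (dv j : WithBot ℕ))) ↔
      ∀ i, h i ≤ dv i :=
  hermite_degree_solvability_general δ R A U H h dv hU hUA hH hdiag
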